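/- arXiv:1810.08417 — 3 statements merged into one kernel-verified Lean document; each statement's English description precedes it below -/
import Mathlib

section
/- Let D = {−1,1}^n and let f(x) = Σ_{a ∈ {0,1}^n} θ_a x^a be a polynomial supported on square-free monomials. Then f is the indicator function of some subset F ⊆ D if and only if for every a ∈ {0,1}^n, θ_a = Σ_{a' ∈ {0,1}^n} θ_{a'} θ_{a + a' mod 2}, where a + a' mod 2 denotes coordinatewise addition modulo 2. -/
/-!
On the cube `D = {-1,1}ⁿ` the square-free monomials `χ_a(x) = x^a` are the characters of `D`:
`χ_a χ_b = χ_{a+b}`, so the product of two square-free expansions is the expansion of the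
convolution of their coefficient families, and `f² = f` on `D` reads `θ ⋆ θ = θ` after
comparing coefficients. Coefficients are unique because the characters are orthogonal:
`∑_{d ∈ D} χ_a(d) = 2ⁿ [a = 0]`. Finally, a function on `D` is an indicator exactly when it
is idempotent.
-/

open MvPolynomial Finset

/-- The square-free polynomial `Σ_{a ∈ {0,1}ⁿ} θ_a x^a` on two-level factors. -/
noncomputable def tlPoly (n : ℕ) (θ : (Fin n → Fin 2) → ℚ) : MvPolynomial (Fin n) ℚ :=
  ∑ a : Fin n → Fin 2, C (θ a) * ∏ j, X j ^ (a j : ℕ)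

lemma add_self_eq_zero_of_fin_two {ι : Type*} (a : ι → Fin 2) : a + a = 0 :=
  funext fun j => by
    have h : ∀ x : Fin 2, x + x = 0 := by decide
    exact h (a j)

lemma add_add_cancel_of_fin_two {ι : Type*} (a b : ι → Fin 2) : a + (a + b) = b := by
  rw [← add_assoc, add_self_eq_zero_of_fin_two, zero_add]

section Characters

variable {ι R : Type*} [Fintype ι]

def chi [CommMonoid R] (a : ι → Fin 2) (d : ι → R) : R := ∏ j, d j ^ (a j : ℕ)

lemma chi_mul_chi [CommMonoid R] {d : ι → R} (hd : ∀ j, d j ^ 2 = 1) (a b : ι → Fin 2) :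
    chi a d * chi b d = chi (a + b) d := by
  simp only [chi, ← prod_mul_distrib, ← pow_add]
  refine prod_congr rfl fun j _ => ?_
  rw [Pi.add_apply, Fin.val_add, ← pow_eq_pow_mod _ (hd j)]

variable [DecidableEq ι]

def sqfreeEval [CommSemiring R] (θ : (ι → Fin 2) → R) (d : ι → R) : R :=
  ∑ a, θ a * chi a d

def sqfreeConv [CommSemiring R] (θ η : (ι → Fin 2) → R) (a : ι → Fin 2) : R :=
  ∑ a', θ a' * η (a + a')

lemma sqfreeEval_mul_sqfreeEval [CommSemiring R] {d : ι → R} (hd : ∀ j, d j ^ 2 = 1)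
    (θ η : (ι → Fin 2) → R) :
    sqfreeEval θ d * sqfreeEval η d = sqfreeEval (sqfreeConv θ η) d := by
  have reindex : ∀ a, ∑ b, θ a * η b * chi (a + b) d = ∑ c, θ a * η (a + c) * chi c d :=
    fun a => by
      simpa only [Equiv.coe_addLeft, add_add_cancel_of_fin_two] using
        Equiv.sum_comp (Equiv.addLeft a) fun c => θ a * η (a + c) * chi c d
  calc sqfreeEval θ d * sqfreeEval η d
      = ∑ a, ∑ b, θ a * η b * chi (a + b) d := by
        simp only [sqfreeEval, sum_mul_sum, ← chi_mul_chi hd]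
        exact sum_congr rfl fun a _ => sum_congr rfl fun b _ => by ring
    _ = ∑ c, ∑ a, θ a * η (a + c) * chi c d := by
        rw [sum_congr rfl fun a _ => reindex a, sum_comm]
    _ = sqfreeEval (sqfreeConv θ η) d := by
        simp only [sqfreeEval, sqfreeConv, sum_mul, add_comm]

end Characters

lemma eval_tlPoly (n : ℕ) (θ : (Fin n → Fin 2) → ℚ) (d : Fin n → ℚ) :
    eval d (tlPoly n θ) = sqfreeEval θ d := by
  simp [tlPoly, sqfreeEval, chi]

section Orthogonality

variable {ι R : Type*} [Fintype ι] [DecidableEq ι] [CommRing R] [DecidableEq R]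

def cube : Finset (ι → R) := Fintype.piFinset fun _ => {-1, 1}

lemma mem_cube {d : ι → R} : d ∈ cube ↔ ∀ j, d j = -1 ∨ d j = 1 := by
  simp [cube]

lemma sq_eq_one_of_mem_cube {d : ι → R} (hd : d ∈ cube) (j : ι) : d j ^ 2 = 1 := by
  rcases mem_cube.mp hd j with h | h <;> simp [h]

lemma sum_cube_chi (hR : (-1 : R) ≠ 1) (a : ι → Fin 2) :
    ∑ d ∈ (cube : Finset (ι → R)), chi a d = if a = 0 then 2 ^ Fintype.card ι else 0 := by
  have factor : ∀ k : Fin 2, ∑ x ∈ ({-1, 1} : Finset R), x ^ (k : ℕ) = if k = 0 then 2 else 0 := by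
    intro k
    fin_cases k <;> simp [sum_pair hR, one_add_one_eq_two]
  simp only [cube, chi]
  rw [← prod_univ_sum (fun _ => {-1, 1}) fun j x => x ^ (a j : ℕ)]
  simp only [factor]
  split_ifs with ha
  · simp [ha]
  · obtain ⟨j, hj⟩ := Function.ne_iff.mp ha
    exact prod_eq_zero (mem_univ j) (if_neg hj)

variable [NeZero (2 : R)]

lemma sum_cube_chi_mul_sqfreeEval (θ : (ι → Fin 2) → R) (b : ι → Fin 2) :
    ∑ d ∈ (cube : Finset (ι → R)), chi b d * sqfreeEval θ d = 2 ^ Fintype.card ι * θ b := by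
  have hR : (-1 : R) ≠ 1 := fun h => (two_ne_zero : (2 : R) ≠ 0) (by linear_combination -h)
  have h_orth : ∀ c, (b + c = 0) ↔ (b = c) := fun c => by
    rw [add_eq_zero_iff_eq_neg, neg_eq_of_add_eq_zero_right (add_self_eq_zero_of_fin_two c)]
  calc ∑ d ∈ (cube : Finset (ι → R)), chi b d * sqfreeEval θ d
      = ∑ c, θ c * ∑ d ∈ (cube : Finset (ι → R)), chi (b + c) d := by
        simp only [sqfreeEval, mul_sum]
        rw [sum_comm]
        refine sum_congr rfl fun c _ => sum_congr rfl fun d hd => ?_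
        rw [← chi_mul_chi (sq_eq_one_of_mem_cube hd)]
        ring
    _ = 2 ^ Fintype.card ι * θ b := by
        simp only [sum_cube_chi hR, h_orth, mul_ite, mul_zero, sum_ite_eq, mem_univ, if_true,
          mul_comm]

lemma eq_of_sqfreeEval_eq [IsDomain R] {θ η : (ι → Fin 2) → R}
    (h : ∀ d ∈ (cube : Finset (ι → R)), sqfreeEval θ d = sqfreeEval η d) : θ = η := by
  funext b
  have h2 : (2 : R) ^ Fintype.card ι ≠ 0 := pow_ne_zero _ two_ne_zero
  apply mul_left_cancel₀ h2
  rw [← sum_cube_chi_mul_sqfreeEval, ← sum_cube_chi_mul_sqfreeEval]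
  exact sum_congr rfl fun d hd => by rw [h d hd]

end Orthogonality

lemma exists_indicator_iff_idempotent {α M : Type*} [MonoidWithZero M] [IsLeftCancelMulZero M]
    (P : α → Prop) (f : α → M) :
    (∃ F : Set α, ∀ d, P d → (d ∈ F ∧ f d = 1) ∨ (d ∉ F ∧ f d = 0)) ↔
      ∀ d, P d → IsIdempotentElem (f d) := by
  constructor
  · rintro ⟨F, hF⟩ d hd
    refine IsIdempotentElem.iff_eq_zero_or_one.mpr ?_
    rcases hF d hd with ⟨-, h⟩ | ⟨-, h⟩ <;> simp [h]
  · intro h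
    refine ⟨{d | f d = 1}, fun d hd => ?_⟩
    by_cases h1 : f d = 1
    · exact Or.inl ⟨h1, h1⟩
    · exact Or.inr ⟨h1, (IsIdempotentElem.iff_eq_zero_or_one.mp (h d hd)).resolve_right h1⟩

/-- `f = Σ_{a∈{0,1}ⁿ} θ_a x^a` is the indicator function of some subset `F ⊆ {-1,1}ⁿ`
iff `θ_a = Σ_{a'} θ_{a'} θ_{a+a' mod 2}` for every `a ∈ {0,1}ⁿ`. -/
theorem indicator_iff_theta_relation (n : ℕ) (θ : (Fin n → Fin 2) → ℚ) :
    (∃ F : Set (Fin n → ℚ), ∀ d : Fin n → ℚ, (∀ j, d j = -1 ∨ d j = 1) →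
        ((d ∈ F ∧ eval d (tlPoly n θ) = 1) ∨ (d ∉ F ∧ eval d (tlPoly n θ) = 0))) ↔
    (∀ a : Fin n → Fin 2, θ a = ∑ a' : Fin n → Fin 2, θ a' * θ (a + a')) := by
  have h_idem : ∀ d ∈ (cube : Finset (Fin n → ℚ)),
      IsIdempotentElem (sqfreeEval θ d) ↔ sqfreeEval (sqfreeConv θ θ) d = sqfreeEval θ d :=
    fun d hd => by
      rw [IsIdempotentElem, sqfreeEval_mul_sqfreeEval (sq_eq_one_of_mem_cube hd)]
  simp only [exists_indicator_iff_idempotent, eval_tlPoly, ← mem_cube]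
  calc (∀ d ∈ (cube : Finset (Fin n → ℚ)), IsIdempotentElem (sqfreeEval θ d))
      ↔ sqfreeConv θ θ = θ := by
        refine ⟨fun h => eq_of_sqfreeEval_eq fun d hd => (h_idem d hd).mp (h d hd),
          fun h d hd => (h_idem d hd).mpr (by rw [h])⟩
    _ ↔ _ := by rw [funext_iff]; exact forall_congr' fun a => by rw [sqfreeConv, eq_comm]
end

section
/- Let I = [r_1] × ··· × [r_n] with r_j ≥ 2 and m = ∏ r_j. Define the contrast matrix C with rows indexed by: the constant row 1_m; and for each nonempty J ⊆ [n] with |J| = k and each ĩ ∈ ∏_{j ∈ J}[r_j − 1], the row c_{J(ĩ)} given by c_{J(ĩ)}(i) = 1 if i_J = (ĩ_1,...,ĩ_{k−1},1), c_{J(ĩ)}(i) = −1 if i_J = (ĩ_1,...,ĩ_{k−1},ĩ_k + 1), and 0 otherwise (for k = 1: value 1 if i_J = 1, value −1 if i_J = ĩ + 1, else 0). Then C is a nonsingular m × m matrix. -/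
/-! Since `C` is square, it suffices that its rows span all functions on `I`. Peel off the last
coordinate: the row `snoc ρ' none` is the row `ρ'` of the smaller contrast matrix, while the row
`snoc ρ' (some t)` is the cell indicator `∏ⱼ [iⱼ = ρ'ⱼ]` times the one-coordinate contrast
`δ₀ - δₜ₊₁`. By induction the smaller contrast rows span, and so do the cell indicators; on one
coordinate, `1` and the contrasts span because `δ₀ = (1 + ∑ₜ (δ₀ - δₜ₊₁)) / r`. Finally, products
`f ⊗ g` with `f` and `g` ranging over spanning families span the functions on a product. -/

/- A row of the contrast matrix. A row is indexed by `ρ : ∀ j, Option (Fin (rⱼ - 1))`,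
encoding the subset `J = {j : ρ j ≠ none}` and the choice `ĩ ∈ ∏_{j∈J} [rⱼ - 1]`
(levels of `[rⱼ]` are 0-indexed by `Fin (rⱼ)`, and `ĩⱼ ∈ [rⱼ-1]` is 0-indexed by
`Fin (rⱼ - 1)`).  The row with `J = ∅` is the all-ones row.  For `J ≠ ∅` with
maximal element `k`, the entry at `i` is `1` if `iⱼ = ĩⱼ` for `j ∈ J, j ≠ k` and
`i_k` is the first level, `-1` if `iⱼ = ĩⱼ` for `j ∈ J, j ≠ k` and `i_k = ĩ_k + 1`,
and `0` otherwise. -/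
open Classical in
noncomputable def contrastRow (n : ℕ) (r : Fin n → ℕ)
    (ρ : ∀ j, Option (Fin (r j - 1))) (i : ∀ j, Fin (r j)) : ℚ :=
  let J : Finset (Fin n) := Finset.univ.filter fun j => (ρ j).isSome
  if hJ : J.Nonempty then
    let k := J.max' hJ
    if ∀ j ∈ J, j ≠ k → ∀ h : (ρ j).isSome, (i j : ℕ) = ((ρ j).get h : ℕ) then
      if (i k : ℕ) = 0 then 1
      else if ∀ h : (ρ k).isSome, (i k : ℕ) = ((ρ k).get h : ℕ) + 1 then -1
      else 0
    else 0
  else 1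

open Finset Submodule

theorem LinearMap.apply_mem_of_span_eq_top {R M N : Type*} [Semiring R] [AddCommMonoid M]
    [Module R M] [AddCommMonoid N] [Module R N] (φ : M →ₗ[R] N) {S : Set M}
    (hS : span R S = ⊤) {W : Submodule R N} (h : ∀ x ∈ S, φ x ∈ W) (x : M) : φ x ∈ W :=
  span_le (p := W.comap φ) |>.2 h (hS ▸ mem_top)

theorem span_eq_top_of_one_mem {R X : Type*} [Semiring R] [Subsingleton X] {S : Set (X → R)}
    (h : 1 ∈ S) : span R S = ⊤ := by
  refine eq_top_iff'.2 fun f => ?_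
  rcases isEmpty_or_nonempty X with _ | ⟨⟨x⟩⟩
  · simp [Subsingleton.elim f 0]
  · have : f = f x • 1 := funext fun y => by simp [Subsingleton.elim y x]
    exact this ▸ smul_mem _ _ (subset_span h)

theorem Matrix.mulVec_injective_of_span_range_row_eq_top {R m n : Type*} [CommSemiring R]
    [Fintype m] [Fintype n] {M : Matrix m n R} (h : span R (Set.range M.row) = ⊤) :
    Function.Injective M.mulVec := by
  classical
  obtain ⟨B, hB⟩ := vecMul_surjective_iff_exists_left_inverse.1 <|
    LinearMap.range_eq_top.1 ((range_vecMulLinear M).trans h)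
  intro x y hxy
  simpa [mulVec_mulVec, hB] using congrArg B.mulVec hxy

section Snoc

variable {R : Type*} [CommSemiring R] {n : ℕ} {α : Fin (n + 1) → Type*}

variable (R α) in
def snocMul :
    ((∀ j : Fin n, α j.castSucc) → R) →ₗ[R] (α (Fin.last n) → R) →ₗ[R] ((∀ j, α j) → R) :=
  LinearMap.mk₂ R (fun f g i => f (Fin.init i) * g (i (Fin.last n)))
    (fun _ _ _ => funext fun _ => add_mul _ _ _) (fun _ _ _ => funext fun _ => mul_assoc _ _ _)
    (fun _ _ _ => funext fun _ => mul_add _ _ _)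
    (fun _ _ _ => funext fun _ => mul_left_comm _ _ _)

@[simp]
theorem snocMul_apply (f : (∀ j : Fin n, α j.castSucc) → R) (g : α (Fin.last n) → R)
    (i : ∀ j, α j) : snocMul R α f g i = f (Fin.init i) * g (i (Fin.last n)) := rfl

theorem snocMul_single [DecidableEq (∀ j, α j)] [DecidableEq (∀ j : Fin n, α j.castSucc)]
    [DecidableEq (α (Fin.last n))] (i : ∀ j, α j) :
    snocMul R α (Pi.single (Fin.init i) 1) (Pi.single (i (Fin.last n)) 1) = Pi.single i 1 := by
  ext i'
  conv_rhs => rw [← Fin.snoc_init_self i, ← Fin.snoc_init_self i']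
  simp only [snocMul_apply, Pi.single_apply, Fin.snoc_inj]
  split_ifs <;> simp_all

theorem eq_top_of_forall_snocMul_mem [∀ j, Fintype (α j)] {W : Submodule R ((∀ j, α j) → R)}
    (h : ∀ f g, snocMul R α f g ∈ W) : W = ⊤ := by
  classical
  rw [eq_top_iff, ← (Pi.basisFun R _).span_eq, span_le]
  rintro _ ⟨i, rfl⟩
  simpa [snocMul_single] using h (Pi.single (Fin.init i) 1) (Pi.single (i (Fin.last n)) 1)

theorem eq_top_of_snocMul_mem [∀ j, Fintype (α j)] {W : Submodule R ((∀ j, α j) → R)}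
    {T : Set (α (Fin.last n) → R)} (hT : span R T = ⊤)
    (h : ∀ g ∈ T, ∀ f, snocMul R α f g ∈ W) : W = ⊤ :=
  eq_top_of_forall_snocMul_mem fun f =>
    (snocMul R α f).apply_mem_of_span_eq_top hT fun g hg => h g hg f

end Snoc

theorem span_range_prod_eq_top {R : Type*} [CommSemiring R] : ∀ {n : ℕ} {ι α : Fin n → Type*}
    [∀ j, Fintype (α j)] (b : ∀ j, ι j → α j → R), (∀ j, span R (Set.range (b j)) = ⊤) →
    span R (Set.range fun (ρ : ∀ j, ι j) (i : ∀ j, α j) => ∏ j, b j (ρ j) (i j)) = ⊤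
  | 0, _, _, _, _, _ => span_eq_top_of_one_mem ⟨isEmptyElim, by simp; rfl⟩
  | n + 1, _, α, _, b, hb => by
    refine eq_top_of_snocMul_mem (hb (Fin.last n)) ?_
    rintro _ ⟨σ, rfl⟩
    refine LinearMap.apply_mem_of_span_eq_top ((snocMul R α).flip (b _ σ))
      (span_range_prod_eq_top (fun j => b j.castSucc) fun j => hb _) ?_
    rintro _ ⟨ρ, rfl⟩
    refine subset_span ⟨Fin.snoc ρ σ, funext fun i => ?_⟩
    simp [Fin.prod_univ_castSucc, Fin.init]

section Level

variable (R : Type*) [CommRing R]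

def levelIndicator (m : ℕ) : Option (Fin (m - 1)) → Fin m → R
  | none => 1
  | some t => fun x => if (x : ℕ) = t then 1 else 0

def levelContrast (m : ℕ) : Option (Fin (m - 1)) → Fin m → R
  | none => 1
  | some t => fun x => if (x : ℕ) = 0 then 1 else if (x : ℕ) = t + 1 then -1 else 0

variable {R}

@[simp] theorem levelIndicator_none (m : ℕ) : levelIndicator R m none = 1 := rfl

@[simp] theorem levelContrast_none (m : ℕ) : levelContrast R m none = 1 := rfl

theorem levelIndicator_eq_ite (m : ℕ) (σ : Option (Fin (m - 1))) (x : Fin m) :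
    levelIndicator R m σ x = if ∀ t, σ = some t → (x : ℕ) = t then 1 else 0 := by
  cases σ <;> simp [levelIndicator]

theorem sum_pi_single_one {X : Type*} [Fintype X] [DecidableEq X] :
    ∑ x : X, Pi.single x (1 : R) = 1 :=
  univ_sum_single (1 : X → R)

theorem span_range_levelIndicator (m : ℕ) : span R (Set.range (levelIndicator R m)) = ⊤ := by
  classical
  obtain _ | p := m
  · exact Subsingleton.elim _ _
  have hcast (t : Fin p) : levelIndicator R (p + 1) (some t) = Pi.single t.castSucc 1 := by
    ext x; simp [levelIndicator, Pi.single_apply, Fin.ext_iff, eq_comm]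
  have hlast : Pi.single (Fin.last p) (1 : R) =
      levelIndicator R (p + 1) none - ∑ t : Fin p, levelIndicator R (p + 1) (some t) := by
    rw [eq_sub_iff_add_eq, levelIndicator_none, ← sum_pi_single_one, Fin.sum_univ_castSucc]
    simp only [hcast, add_comm]
  rw [eq_top_iff, ← (Pi.basisFun R _).span_eq, span_le]
  rintro _ ⟨x, rfl⟩
  rw [Pi.basisFun_apply]
  induction x using Fin.lastCases with
  | cast t =>
    rw [← hcast]
    exact subset_span ⟨_, rfl⟩
  | last =>
    rw [hlast]
    exact sub_mem (subset_span ⟨_, rfl⟩) (sum_mem fun t _ => subset_span ⟨_, rfl⟩)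

theorem span_range_levelContrast {K : Type*} [Field K] [CharZero K] (m : ℕ) :
    span K (Set.range (levelContrast K m)) = ⊤ := by
  classical
  obtain _ | p := m
  · exact Subsingleton.elim _ _
  have hsucc (t : Fin p) :
      levelContrast K (p + 1) (some t) = Pi.single 0 1 - Pi.single t.succ 1 := by
    ext x
    cases x using Fin.cases <;> simp [levelContrast, Pi.single_apply, Fin.ext_iff, apply_ite]
  have hzero : Pi.single 0 (1 : K) = ((p : K) + 1)⁻¹ •
      (levelContrast K (p + 1) none + ∑ t : Fin p, levelContrast K (p + 1) (some t)) := by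
    rw [eq_inv_smul_iff₀ (Nat.cast_add_one_ne_zero p), levelContrast_none, ← sum_pi_single_one,
      Fin.sum_univ_succ]
    simp only [hsucc, sum_sub_distrib, sum_const, card_univ, Fintype.card_fin]
    module
  have hzero_mem : Pi.single 0 (1 : K) ∈ span K (Set.range (levelContrast K (p + 1))) := by
    rw [hzero]
    exact smul_mem _ _ (add_mem (subset_span ⟨_, rfl⟩) (sum_mem fun t _ => subset_span ⟨_, rfl⟩))
  rw [eq_top_iff, ← (Pi.basisFun K _).span_eq, span_le]
  rintro _ ⟨x, rfl⟩
  rw [Pi.basisFun_apply]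
  induction x using Fin.cases with
  | zero => exact hzero_mem
  | succ t =>
    rw [show Pi.single t.succ (1 : K) = Pi.single 0 1 - levelContrast K (p + 1) (some t) by
      rw [hsucc, sub_sub_cancel]]
    exact sub_mem hzero_mem (subset_span ⟨_, rfl⟩)

end Level

theorem contrastRow_of_forall_eq_none {n : ℕ} {r : Fin n → ℕ} {ρ : ∀ j, Option (Fin (r j - 1))}
    (hρ : ∀ j, ρ j = none) : contrastRow n r ρ = 1 := by
  ext i
  simp [contrastRow, hρ]

theorem contrastRow_eq_prod {n : ℕ} {r : Fin n → ℕ} {ρ : ∀ j, Option (Fin (r j - 1))} {k : Fin n}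
    (hk : (ρ k).isSome) (hmax : ∀ j, k < j → ρ j = none) (i : ∀ j, Fin (r j)) :
    contrastRow n r ρ i = ∏ j, if j = k then levelContrast ℚ (r j) (ρ j) (i j)
      else levelIndicator ℚ (r j) (ρ j) (i j) := by
  obtain ⟨t, ht⟩ := Option.isSome_iff_exists.1 hk
  have hprod : (∏ j ∈ univ.erase k, if j = k then levelContrast ℚ (r j) (ρ j) (i j)
      else levelIndicator ℚ (r j) (ρ j) (i j)) =
      if ∀ j, j ≠ k → ∀ t, ρ j = some t → (i j : ℕ) = t then 1 else 0 := by
    rw [prod_congr rfl fun j hj => if_neg (ne_of_mem_erase hj)]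
    simp only [levelIndicator_eq_ite, prod_boole, mem_erase, mem_univ, and_true]
  have hJ : (univ.filter fun j => (ρ j).isSome).Nonempty := ⟨k, by simpa using hk⟩
  have hmax' : (univ.filter fun j => (ρ j).isSome).max' hJ = k := by
    refine le_antisymm (max'_le _ hJ _ fun j hj => ?_) (le_max' _ k (by simpa using hk))
    by_contra! hlt
    simp [hmax j hlt] at hj
  rw [← mul_prod_erase univ _ (mem_univ k), if_pos rfl, hprod, contrastRow, dif_pos hJ]
  -- `rw [hmax']` fails: the `Option.get` proofs depend on the maximum.
  generalize (univ.filter fun j => (ρ j).isSome).max' hJ = K at hmax' ⊢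
  subst hmax'
  simp only [ht, levelContrast, mem_filter, mem_univ, true_and, Option.isSome_some,
    Option.get_some, forall_const, mul_ite, mul_one, mul_zero]
  refine if_congr (forall_congr' fun j => ?_) rfl rfl
  generalize ρ j = o
  cases o <;> simp

section Snoc

variable {n : ℕ} {r : Fin (n + 1) → ℕ} (ρ : ∀ j : Fin n, Option (Fin (r j.castSucc - 1)))

theorem contrastRow_snoc_some (t : Fin (r (Fin.last n) - 1)) :
    contrastRow (n + 1) r (Fin.snoc ρ (some t)) =
      snocMul ℚ (fun j => Fin (r j)) (fun i => ∏ j, levelIndicator ℚ _ (ρ j) (i j))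
        (levelContrast ℚ _ (some t)) := by
  ext i
  rw [contrastRow_eq_prod (k := Fin.last n) (by simp) fun j hj => absurd hj (Fin.le_last j).not_gt]
  simp [Fin.prod_univ_castSucc, Fin.init]

theorem contrastRow_snoc_none :
    contrastRow (n + 1) r (Fin.snoc ρ none) =
      snocMul ℚ (fun j => Fin (r j)) (contrastRow n (fun j => r j.castSucc) ρ) 1 := by
  ext i
  by_cases hρ : ∀ j, ρ j = none
  · rw [contrastRow_of_forall_eq_none hρ, contrastRow_of_forall_eq_none]
    · simp
    · intro j
      induction j using Fin.lastCases <;> simp [hρ]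
  push Not at hρ
  obtain ⟨k, hk, hmax⟩ := (univ.filter fun j => (ρ j).isSome).exists_max_image id
    (by simpa [Finset.Nonempty, Option.ne_none_iff_isSome] using hρ)
  simp only [mem_filter, mem_univ, true_and, id] at hk hmax
  have hmax' (j : Fin n) (hj : k < j) : ρ j = none := by
    by_contra h
    exact hj.not_ge (hmax j (Option.ne_none_iff_isSome.1 h))
  rw [snocMul_apply, Pi.one_apply, mul_one, contrastRow_eq_prod hk hmax',
    contrastRow_eq_prod (k := k.castSucc) (by simpa using hk)]
  · simp [Fin.prod_univ_castSucc, Fin.init]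
  · intro j hj
    induction j using Fin.lastCases with
    | last => simp
    | cast j => simpa using hmax' j (Fin.castSucc_lt_castSucc_iff.1 hj)

end Snoc

theorem span_range_contrastRow : ∀ (n : ℕ) (r : Fin n → ℕ),
    span ℚ (Set.range (contrastRow n r)) = ⊤
  | 0, _ => span_eq_top_of_one_mem ⟨isEmptyElim, contrastRow_of_forall_eq_none isEmptyElim⟩
  | n + 1, r => by
    refine eq_top_of_snocMul_mem (span_range_levelContrast _) ?_
    rintro _ ⟨_ | t, rfl⟩
    · refine LinearMap.apply_mem_of_span_eq_top ((snocMul ℚ (fun j => Fin (r j))).flip 1)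
        (span_range_contrastRow n fun j => r j.castSucc) ?_
      rintro _ ⟨ρ, rfl⟩
      exact subset_span ⟨Fin.snoc ρ none, contrastRow_snoc_none ρ⟩
    · refine LinearMap.apply_mem_of_span_eq_top ((snocMul ℚ (fun j => Fin (r j))).flip _)
        (span_range_prod_eq_top (fun j => levelIndicator ℚ (r j.castSucc))
          fun j => span_range_levelIndicator _) ?_
      rintro _ ⟨ρ, rfl⟩
      exact subset_span ⟨Fin.snoc ρ (some t), contrastRow_snoc_some ρ t⟩

/-- The contrast matrix `C` is a nonsingular `m × m` matrix. -/
theorem contrastMatrix_nonsingular (n : ℕ) (r : Fin n → ℕ) (hr : ∀ j, 2 ≤ r j) :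
    Function.Bijective
      (Matrix.mulVecLin
        (Matrix.of fun (ρ : ∀ j, Option (Fin (r j - 1))) (i : ∀ j, Fin (r j)) =>
          contrastRow n r ρ i)) := by
  have hinj := Matrix.mulVec_injective_of_span_range_row_eq_top (span_range_contrastRow n r)
  have hcard : Fintype.card (∀ j, Fin (r j)) = Fintype.card (∀ j, Option (Fin (r j - 1))) := by
    simp only [Fintype.card_pi, Fintype.card_fin, Fintype.card_option]
    exact prod_congr rfl fun j _ => by have := hr j; omega
  refine ⟨hinj, (LinearMap.injective_iff_surjective_of_finrank_eq_finrank ?_).1 hinj⟩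
  simp only [Module.finrank_fintype_fun_eq_card, hcard]
end

section
/- Let I = [r_1] × ··· × [r_n], y : I → {0,1}, and F = {i ∈ I : y(i) = 1}. Fix t ≤ n and suppose s is a common multiple of {∏_{j∈J} r_j : J ⊆ [n], |J| = t}. Then F has size s and is orthogonal of strength t (i.e., for every J with |J| = t and every level combination i_J ∈ ∏_{j∈J}[r_j], the number of points of F with that restriction is s/∏_{j∈J}r_j) if and only if Σ_i y(i) = s and C_k y = 0 for k = 1,...,t, where C_k is the block of contrast rows c_{J(ĩ)} with |J| = k. -/
open Finset Function

section Marginal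

variable {ι : Type*} [DecidableEq ι] {α : ι → Type*}

lemma forall_mem_eq_update_iff {J : Finset ι} {j : ι} (hj : j ∈ J) (i ℓ : ∀ j, α j) (a : α j) :
    (∀ x ∈ J, i x = update ℓ j a x) ↔ (∀ x ∈ J.erase j, i x = ℓ x) ∧ i j = a := by
  conv_lhs => rw [← insert_erase hj]
  rw [forall_mem_insert, update_self, and_comm]
  refine and_congr_left' (forall₂_congr fun x hx => ?_)
  rw [update_of_ne (ne_of_mem_erase hx)]

variable [∀ j, Fintype (α j)]

lemma eq_zero_of_sum_update_eq_zero {M : Type*} [AddCommMonoid M] (τ : ∀ j, α j)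
    {S : Finset ι} {f : (∀ j, α j) → M} (hsum : ∀ j ∈ S, ∀ ℓ, ∑ a, f (update ℓ j a) = 0)
    (hoff : ∀ ℓ, (∀ j ∈ S, ℓ j ≠ τ j) → f ℓ = 0) (ℓ : ∀ j, α j) : f ℓ = 0 := by
  induction S using Finset.induction_on with
  | empty => exact hoff ℓ (by simp)
  | insert j S hj ih =>
    refine ih (fun x hx => hsum x (mem_insert_of_mem hx)) fun ℓ hℓ => ?_
    by_cases hℓj : ℓ j = τ j
    · rw [← hsum j (mem_insert_self j S) ℓ, sum_eq_single (ℓ j) _ (by simp), update_eq_self]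
      intro a _ ha
      refine hoff _ fun x hx => ?_
      rcases mem_insert.1 hx with rfl | hxS
      · rwa [update_self, ← hℓj]
      · rw [update_of_ne (ne_of_mem_of_not_mem hxS hj)]
        exact hℓ x hxS
    · exact hoff ℓ (forall_mem_insert _ _ _ |>.2 ⟨hℓj, hℓ⟩)

variable [Fintype ι] [∀ j, DecidableEq (α j)]

def marginal {M : Type*} [AddCommMonoid M] (y : (∀ j, α j) → M) (J : Finset ι)
    (ℓ : ∀ j, α j) : M :=
  ∑ i with ∀ j ∈ J, i j = ℓ j, y i

def IsBalancedOn {M : Type*} [AddCommMonoid M] (y : (∀ j, α j) → M) (J : Finset ι) : Prop :=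
  ∀ ℓ ℓ', marginal y J ℓ = marginal y J ℓ'

section AddCommMonoid

variable {M : Type*} [AddCommMonoid M] {y : (∀ j, α j) → M}

@[simp]
lemma marginal_empty (ℓ : ∀ j, α j) : marginal y ∅ ℓ = ∑ i, y i := by
  simp [marginal]

lemma marginal_erase {J : Finset ι} {j : ι} (hj : j ∈ J) (ℓ : ∀ j, α j) :
    marginal y (J.erase j) ℓ = ∑ a, marginal y J (update ℓ j a) := by
  rw [marginal, ← sum_fiberwise _ (fun i => i j)]
  refine sum_congr rfl fun a _ => ?_
  rw [marginal, filter_filter]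
  simp_rw [forall_mem_eq_update_iff hj]

lemma IsBalancedOn.erase {J : Finset ι} (h : IsBalancedOn y J) (j : ι) :
    IsBalancedOn y (J.erase j) := by
  by_cases hj : j ∈ J
  · intro ℓ ℓ'
    rw [marginal_erase hj, marginal_erase hj]
    exact sum_congr rfl fun a _ => h _ _
  · rwa [erase_eq_of_notMem hj]

lemma IsBalancedOn.mono {J J' : Finset ι} (h : IsBalancedOn y J) (hJ' : J' ⊆ J) :
    IsBalancedOn y J' := by
  rw [← Finset.sdiff_sdiff_eq_self hJ']
  induction J \ J' using Finset.induction_on with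
  | empty => rwa [sdiff_empty]
  | insert j D _ ih => rw [sdiff_insert]; exact ih.erase j

end AddCommMonoid

lemma marginal_eq_card {M : Type*} [AddCommMonoidWithOne M] [DecidableEq M]
    {y : (∀ j, α j) → M} (hy : ∀ i, y i = 0 ∨ y i = 1) (J : Finset ι) (ℓ : ∀ j, α j) :
    marginal y J ℓ = ((#{i | (∀ j ∈ J, i j = ℓ j) ∧ y i = 1} : ℕ) : M) := by
  rw [marginal, ← filter_filter, ← sum_boole]
  refine sum_congr rfl fun i _ => ?_
  rcases hy i with h | h <;> simp [h]

lemma IsBalancedOn.marginal_mul_prod {R : Type*} [CommSemiring R] {y : (∀ j, α j) → R}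
    {J : Finset ι} (h : IsBalancedOn y J) (ℓ : ∀ j, α j) :
    marginal y J ℓ * ∏ j ∈ J, (Fintype.card (α j) : R) = ∑ i, y i := by
  induction J using Finset.induction_on generalizing ℓ with
  | empty => simp
  | insert j J hj ih =>
    have hJ := h.erase j
    rw [erase_insert hj] at hJ
    rw [prod_insert hj, ← ih hJ ℓ, ← erase_insert hj, marginal_erase (mem_insert_self j J),
      erase_insert hj]
    simp only [h _ ℓ, sum_const, card_univ, nsmul_eq_mul]
    ring

lemma isBalancedOn_iff_marginal_mul_prod {K : Type*} [Field K] [CharZero K]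
    [∀ j, Nonempty (α j)] {y : (∀ j, α j) → K} {J : Finset ι} :
    IsBalancedOn y J ↔ ∀ ℓ, marginal y J ℓ * ∏ j ∈ J, (Fintype.card (α j) : K) = ∑ i, y i := by
  refine ⟨IsBalancedOn.marginal_mul_prod, fun h ℓ ℓ' => ?_⟩
  have hprod : ∏ j ∈ J, (Fintype.card (α j) : K) ≠ 0 :=
    prod_ne_zero_iff.2 fun j _ => Nat.cast_ne_zero.2 Fintype.card_ne_zero
  exact mul_right_cancel₀ hprod ((h ℓ).trans (h ℓ').symm)

end Marginal

section Contrast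

variable {n : ℕ} {r : Fin n → ℕ}

abbrev contrastSupport (ρ : ∀ j, Option (Fin (r j - 1))) : Finset (Fin n) :=
  univ.filter fun j => (ρ j).isSome

lemma contrastRow_eq_sub {ρ : ∀ j, Option (Fin (r j - 1))} {J : Finset (Fin n)}
    (hJ : contrastSupport ρ = J) (hne : J.Nonempty) {k : Fin n} (hk : J.max' hne = k)
    {ℓ : ∀ j, Fin (r j)} (hℓ : ∀ j ∈ J.erase k, ∀ h : (ρ j).isSome, (ℓ j : ℕ) = (ρ j).get h)
    {b₀ b₁ : Fin (r k)} (hb₀ : (b₀ : ℕ) = 0) (hb₁ : ∀ h : (ρ k).isSome, (b₁ : ℕ) = (ρ k).get h + 1)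
    (i : ∀ j, Fin (r j)) :
    contrastRow n r ρ i = (if ∀ j ∈ J, i j = update ℓ k b₀ j then 1 else 0) -
      (if ∀ j ∈ J, i j = update ℓ k b₁ j then 1 else 0) := by
  subst hJ
  have hkJ : k ∈ contrastSupport ρ := hk ▸ max'_mem _ hne
  have hkS : (ρ k).isSome := (mem_filter.1 hkJ).2
  have hC : (∀ j ∈ contrastSupport ρ, j ≠ k → ∀ h : (ρ j).isSome, (i j : ℕ) = (ρ j).get h) ↔
      ∀ j ∈ (contrastSupport ρ).erase k, i j = ℓ j := by
    simp only [mem_erase, and_imp, Fin.ext_iff]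
    refine forall_congr' fun j => ⟨fun h hjk hj => ?_, fun h hj hjk hS => ?_⟩
    · rw [h hj hjk (mem_filter.1 hj).2, hℓ j (mem_erase.2 ⟨hjk, hj⟩)]
    · rw [h hjk hj, hℓ j (mem_erase.2 ⟨hjk, hj⟩)]
  simp only [forall_mem_eq_update_iff hkJ, Fin.ext_iff (b := b₀), Fin.ext_iff (b := b₁), hb₀,
    hb₁ hkS]
  rw [contrastRow, dif_pos hne]
  dsimp only
  rw [hk]
  by_cases hA : ∀ j ∈ (contrastSupport ρ).erase k, i j = ℓ j
  · rw [if_pos (hC.2 hA)]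
    split_ifs <;> simp_all
  · rw [if_neg (mt hC.1 hA)]
    simp only [hA, false_and, if_false, sub_self]

lemma sum_contrastRow_mul {ρ : ∀ j, Option (Fin (r j - 1))} {J : Finset (Fin n)}
    (hJ : contrastSupport ρ = J) (hne : J.Nonempty) {k : Fin n} (hk : J.max' hne = k)
    {ℓ : ∀ j, Fin (r j)} (hℓ : ∀ j ∈ J.erase k, ∀ h : (ρ j).isSome, (ℓ j : ℕ) = (ρ j).get h)
    {b₀ b₁ : Fin (r k)} (hb₀ : (b₀ : ℕ) = 0) (hb₁ : ∀ h : (ρ k).isSome, (b₁ : ℕ) = (ρ k).get h + 1)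
    (y : (∀ j, Fin (r j)) → ℚ) :
    ∑ i, contrastRow n r ρ i * y i =
      marginal y J (update ℓ k b₀) - marginal y J (update ℓ k b₁) := by
  simp_rw [contrastRow_eq_sub hJ hne hk hℓ hb₀ hb₁, sub_mul, ite_mul, one_mul, zero_mul,
    sum_sub_distrib, ← sum_filter, marginal]

lemma IsBalancedOn.sum_contrastRow_mul_eq_zero {y : (∀ j, Fin (r j)) → ℚ}
    {ρ : ∀ j, Option (Fin (r j - 1))} (hy : IsBalancedOn y (contrastSupport ρ))
    (hr : ∀ j, 0 < r j) (hne : (contrastSupport ρ).Nonempty) :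
    ∑ i, contrastRow n r ρ i * y i = 0 := by
  set k := (contrastSupport ρ).max' hne
  have hkS : (ρ k).isSome := (mem_filter.1 (max'_mem _ hne)).2
  let ℓ : ∀ j, Fin (r j) := fun j =>
    if h : (ρ j).isSome then ((ρ j).get h).castLE (Nat.sub_le _ _) else ⟨0, hr j⟩
  have hℓ : ∀ j ∈ (contrastSupport ρ).erase k, ∀ h : (ρ j).isSome, (ℓ j : ℕ) = (ρ j).get h := by
    intro j _ h
    simp [ℓ, h]
  have hb₁ : ((ρ k).get hkS : ℕ) + 1 < r k := by have := ((ρ k).get hkS).isLt; omega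
  rw [sum_contrastRow_mul rfl hne rfl hℓ (b₀ := ⟨0, hr k⟩) (b₁ := ⟨_, hb₁⟩) rfl fun _ => rfl,
    hy _ _, sub_self]

lemma marginal_update_eq_of_sum_contrastRow_mul (hr : ∀ j, 0 < r j) {y : (∀ j, Fin (r j)) → ℚ}
    {J : Finset (Fin n)} (hne : J.Nonempty) {k : Fin n} (hk : J.max' hne = k)
    (hcontr : ∀ ρ, contrastSupport ρ = J → ∑ i, contrastRow n r ρ i * y i = 0)
    (hsub : ∀ j ∈ J.erase k, IsBalancedOn y (J.erase j)) (ℓ : ∀ j, Fin (r j)) (a : Fin (r k)) :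
    marginal y J (update ℓ k ⟨0, hr k⟩) = marginal y J (update ℓ k a) := by
  have hkJ : k ∈ J := hk ▸ max'_mem J hne
  rw [← sub_eq_zero]
  let top : ∀ j, Fin (r j) := fun j => ⟨r j - 1, Nat.sub_lt (hr j) one_pos⟩
  -- Contrasts only see levels below `top` in the factors `j ≠ k`; the top levels are reached
  -- through the constant marginals on `J.erase j`.
  refine eq_zero_of_sum_update_eq_zero top (S := J.erase k)
    (f := fun ℓ => marginal y J (update ℓ k ⟨0, hr k⟩) - marginal y J (update ℓ k a)) ?_ ?_ ℓ
  · intro j hj ℓ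
    simp_rw [update_comm (ne_of_mem_erase hj)]
    rw [sum_sub_distrib, sub_eq_zero]
    simpa only [marginal_erase (mem_of_mem_erase hj)] using
      hsub j hj (update ℓ k ⟨0, hr k⟩) (update ℓ k a)
  · intro ℓ hℓ
    rcases Nat.eq_zero_or_pos a with ha | ha
    · rw [show a = ⟨0, hr k⟩ from Fin.ext ha, sub_self]
    let v : Fin n → ℕ := update (fun j => (ℓ j : ℕ)) k (a - 1)
    have hv : ∀ j ∈ J, v j < r j - 1 := by
      intro j hj
      rcases eq_or_ne j k with rfl | hjk
      · simp only [v, update_self]; omega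
      · have := hℓ j (mem_erase.2 ⟨hjk, hj⟩)
        simp only [v, update_of_ne hjk, ne_eq, Fin.ext_iff, top] at this ⊢
        omega
    let ρ : ∀ j, Option (Fin (r j - 1)) := fun j => if h : j ∈ J then some ⟨v j, hv j h⟩ else none
    have hρ : contrastSupport ρ = J := by
      ext j
      by_cases h : j ∈ J <;> simp [ρ, h]
    rw [← hcontr ρ hρ, sum_contrastRow_mul hρ hne hk (b₀ := ⟨0, hr k⟩) (b₁ := a) _ rfl]
    · intro h
      simp only [hkJ, ↓reduceDIte, update_self, Option.get_some, ρ, v]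
      omega
    · intro j hj h
      simp [ρ, mem_of_mem_erase hj, v, ne_of_mem_erase hj]

lemma isBalancedOn_of_sum_contrastRow_mul_eq_zero (hr : ∀ j, 0 < r j) {y : (∀ j, Fin (r j)) → ℚ}
    {t : ℕ} (hcontr : ∀ ρ, 1 ≤ #(contrastSupport ρ) → #(contrastSupport ρ) ≤ t →
      ∑ i, contrastRow n r ρ i * y i = 0)
    (J : Finset (Fin n)) (hJ : #J ≤ t) : IsBalancedOn y J := by
  induction J using Finset.strongInduction with
  | H J ih =>
  rcases J.eq_empty_or_nonempty with rfl | hne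
  · intro ℓ ℓ'
    simp
  set k := J.max' hne with hk
  have hkJ : k ∈ J := max'_mem J hne
  have hsub : ∀ j ∈ J, IsBalancedOn y (J.erase j) := fun j hj =>
    ih _ (erase_ssubset hj) ((card_erase_le).trans hJ)
  have hindep : ∀ ℓ, marginal y J ℓ = marginal y J (update ℓ k ⟨0, hr k⟩) := by
    intro ℓ
    conv_lhs => rw [← update_eq_self k ℓ]
    refine (marginal_update_eq_of_sum_contrastRow_mul hr hne hk.symm ?_ ?_ ℓ (ℓ k)).symm
    · intro ρ hρ
      exact hcontr ρ (hρ ▸ card_pos.2 hne) (hρ ▸ hJ)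
    · exact fun j hj => hsub j (mem_of_mem_erase hj)
  have hslice : ∀ ℓ, marginal y (J.erase k) ℓ = r k * marginal y J ℓ := by
    intro ℓ
    rw [marginal_erase hkJ]
    simp_rw [hindep (update ℓ k _), update_idem, ← hindep ℓ]
    simp
  intro ℓ ℓ'
  have := hsub k hkJ ℓ ℓ'
  rw [hslice, hslice] at this
  exact mul_left_cancel₀ (Nat.cast_ne_zero.2 (hr k).ne') this

end Contrast

theorem orthogonal_strength_iff_contrasts_general (n t s : ℕ) (r : Fin n → ℕ)
    (hr : ∀ j, 2 ≤ r j) (ht : t ≤ n)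
    (y : (∀ j, Fin (r j)) → ℚ) (hy : ∀ i, y i = 0 ∨ y i = 1) :
    ((∑ i, y i) = (s : ℚ) ∧
      ∀ J : Finset (Fin n), J.card = t → ∀ ℓ : ∀ j, Fin (r j),
        (Finset.univ.filter fun i : ∀ j, Fin (r j) =>
            (∀ j ∈ J, i j = ℓ j) ∧ y i = 1).card * ∏ j ∈ J, r j = s) ↔
    ((∑ i, y i) = (s : ℚ) ∧
      ∀ ρ : ∀ j, Option (Fin (r j - 1)),
        1 ≤ (Finset.univ.filter fun j => (ρ j).isSome).card →
        (Finset.univ.filter fun j => (ρ j).isSome).card ≤ t →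
        ∑ i, contrastRow n r ρ i * y i = 0) := by
  have hr₀ : ∀ j, 0 < r j := fun j => lt_of_lt_of_le two_pos (hr j)
  refine and_congr_right fun hsum => ?_
  have horth : ∀ J : Finset (Fin n), (∀ ℓ : ∀ j, Fin (r j),
      #{i | (∀ j ∈ J, i j = ℓ j) ∧ y i = 1} * ∏ j ∈ J, r j = s) ↔ IsBalancedOn y J := by
    intro J
    have : ∀ j, Nonempty (Fin (r j)) := fun j => ⟨⟨0, hr₀ j⟩⟩
    simp only [isBalancedOn_iff_marginal_mul_prod, marginal_eq_card hy, Fintype.card_fin, hsum]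
    exact_mod_cast Iff.rfl
  simp_rw [horth]
  constructor
  · intro hbal ρ hpos hle
    obtain ⟨J, hsub, -, hJ⟩ := exists_subsuperset_card_eq (subset_univ _) hle (by simpa using ht)
    exact ((hbal J hJ).mono hsub).sum_contrastRow_mul_eq_zero hr₀ (card_pos.1 hpos)
  · exact fun hcontr J hJ => isBalancedOn_of_sum_contrastRow_mul_eq_zero hr₀ hcontr J hJ.le

/-- A 0/1 response `y` on `I = [r₁] × ⋯ × [rₙ]` defines a fraction of size `s` that is
orthogonal of strength `t` (every combination of levels of any `t` factors appears
`s / ∏_{j∈J} rⱼ` times) iff `Σᵢ y(i) = s` and all contrast rows `c_{J(ĩ)}` with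
`1 ≤ |J| ≤ t` annihilate `y`. -/
theorem orthogonal_strength_iff_contrasts (n t s : ℕ) (r : Fin n → ℕ)
    (hr : ∀ j, 2 ≤ r j) (ht : t ≤ n)
    (y : (∀ j, Fin (r j)) → ℚ) (hy : ∀ i, y i = 0 ∨ y i = 1)
    (hs : ∀ J : Finset (Fin n), J.card = t → (∏ j ∈ J, r j) ∣ s) :
    ((∑ i, y i) = (s : ℚ) ∧
      ∀ J : Finset (Fin n), J.card = t → ∀ ℓ : ∀ j, Fin (r j),
        (Finset.univ.filter fun i : ∀ j, Fin (r j) =>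
            (∀ j ∈ J, i j = ℓ j) ∧ y i = 1).card * ∏ j ∈ J, r j = s) ↔
    ((∑ i, y i) = (s : ℚ) ∧
      ∀ ρ : ∀ j, Option (Fin (r j - 1)),
        1 ≤ (Finset.univ.filter fun j => (ρ j).isSome).card →
        (Finset.univ.filter fun j => (ρ j).isSome).card ≤ t →
        ∑ i, contrastRow n r ρ i * y i = 0) :=
  orthogonal_strength_iff_contrasts_general n t s r hr ht y hy
end
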